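/- 𝔭 = min{𝔭*, 𝔱}. -/
import Mathlib


open Cardinal

/-- `A ⊆* B`: `A \ B` is finite. -/
def StarSubset (A B : Set ℕ) : Prop := (A \ B).Finite

/-- A family of sets is centered if the intersection of every nonempty finite
subfamily is infinite (in particular every member is infinite). -/
def Centered (F : Set (Set ℕ)) : Prop :=
  ∀ G : Finset (Set ℕ), ↑G ⊆ F → G.Nonempty → (⋂ A ∈ G, A).Infinite

/-- `F` has a pseudo-intersection: an infinite `A` with `A ⊆* B` for all `B ∈ F`. -/
def HasPseudoIntersection (F : Set (Set ℕ)) : Prop :=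
  ∃ A : Set ℕ, A.Infinite ∧ ∀ B ∈ F, StarSubset A B

/-- `F` is a family of infinite sets linearly quasiordered by `⊆*`. -/
def LinQuasiOrdered (F : Set (Set ℕ)) : Prop :=
  (∀ A ∈ F, A.Infinite) ∧ ∀ A ∈ F, ∀ B ∈ F, StarSubset A B ∨ StarSubset B A

/-- The pseudo-intersection number 𝔭. -/
noncomputable def pNum : Cardinal :=
  sInf { c | ∃ F : Set (Set ℕ), Centered F ∧ ¬ HasPseudoIntersection F ∧ c = #F }

/-- The tower number 𝔱. -/
noncomputable def tNum : Cardinal :=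
  sInf { c | ∃ F : Set (Set ℕ), LinQuasiOrdered F ∧ ¬ HasPseudoIntersection F ∧ c = #F }

/-- `F` is linearly refinable: each `A ∈ F` has an infinite subset `Â ⊆ A`
such that the family of the `Â`'s is linearly `⊆*`-quasiordered. -/
def LinearlyRefinable (F : Set (Set ℕ)) : Prop :=
  ∃ r : Set ℕ → Set ℕ, (∀ A ∈ F, r A ⊆ A ∧ (r A).Infinite) ∧
    LinQuasiOrdered (r '' F)

/-- The cardinal 𝔭*: minimal cardinality of a centered family of infinite subsets
of ℕ which is not linearly refinable. -/
noncomputable def pStar : Cardinal :=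
  sInf { c | ∃ F : Set (Set ℕ), Centered F ∧ ¬ LinearlyRefinable F ∧ c = #F }

/-! ### Basic lemmas about `StarSubset` -/

lemma star_refl (A : Set ℕ) : StarSubset A A := by
  simp [StarSubset]

lemma star_of_subset {A B : Set ℕ} (h : A ⊆ B) : StarSubset A B := by
  have hd : A \ B = ∅ := by rwa [Set.diff_eq_empty]
  simp [StarSubset, hd]

lemma star_trans {A B C : Set ℕ} (h1 : StarSubset A B) (h2 : StarSubset B C) :
    StarSubset A C := by
  have hsub : A \ C ⊆ (A \ B) ∪ (B \ C) := by
    intro x hx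
    by_cases hB : x ∈ B
    · exact Or.inr ⟨hB, hx.2⟩
    · exact Or.inl ⟨hx.1, hB⟩
  exact Set.Finite.subset (Set.Finite.union h1 h2) hsub

lemma inter_infinite {S A : Set ℕ} (hS : S.Infinite) (h : StarSubset S A) :
    (S ∩ A).Infinite := by
  have he : S ∩ A = S \ (S \ A) := by
    ext x; by_cases hx : x ∈ A <;> simp [hx]
  rw [he]
  exact hS.diff h

/-! ### Chains are centered -/

lemma chain_min {F : Set (Set ℕ)} (hF : LinQuasiOrdered F) (G : Finset (Set ℕ)) :
    ↑G ⊆ F → G.Nonempty → ∃ A ∈ G, ∀ B ∈ G, StarSubset A B := by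
  classical
  induction G using Finset.induction_on with
  | empty => rintro _ ⟨x, hx⟩; simp at hx
  | @insert A G hAG ih =>
    intro hsub _
    have hAF : A ∈ F := hsub (by simp)
    have hGsub : ↑G ⊆ F := by
      intro B hB
      exact hsub (by simp [Finset.mem_coe.mp hB])
    by_cases hGne : G.Nonempty
    · obtain ⟨A', hA'G, hA'min⟩ := ih hGsub hGne
      have hA'F : A' ∈ F := hGsub (Finset.mem_coe.mpr hA'G)
      rcases hF.2 A hAF A' hA'F with h | h
      · refine ⟨A, Finset.mem_insert_self A G, ?_⟩
        intro B hB
        rcases Finset.mem_insert.1 hB with rfl | hB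
        · exact star_refl _
        · exact star_trans h (hA'min B hB)
      · refine ⟨A', Finset.mem_insert_of_mem hA'G, ?_⟩
        intro B hB
        rcases Finset.mem_insert.1 hB with rfl | hB
        · exact h
        · exact hA'min B hB
    · rw [Finset.not_nonempty_iff_eq_empty] at hGne
      subst hGne
      refine ⟨A, by simp, ?_⟩
      intro B hB
      simp only [Finset.mem_insert, Finset.notMem_empty, or_false] at hB
      subst hB
      exact star_refl _

lemma chain_centered {F : Set (Set ℕ)} (hF : LinQuasiOrdered F) : Centered F := by
  intro G hG hne
  obtain ⟨A, hAG, hmin⟩ := chain_min hF G hG hne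
  have hAinf : A.Infinite := hF.1 A (hG (Finset.mem_coe.mpr hAG))
  have hU : (⋃ B ∈ G, (A \ B)).Finite := by
    apply Set.Finite.biUnion (G.finite_toSet)
    intro B hB
    exact hmin B (Finset.mem_coe.mp hB)
  have hsub : A \ (⋃ B ∈ G, (A \ B)) ⊆ ⋂ B ∈ G, B := by
    intro x hx
    simp only [Set.mem_iInter]
    intro B hB
    by_contra hxB
    exact hx.2 (Set.mem_biUnion hB ⟨hx.1, hxB⟩)
  exact Set.Infinite.mono hsub (hAinf.diff hU)

/-! ### A family with a pseudo-intersection is linearly refinable -/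

lemma refinable_of_hasPI {F : Set (Set ℕ)} (h : HasPseudoIntersection F) :
    LinearlyRefinable F := by
  obtain ⟨S, hSinf, hS⟩ := h
  refine ⟨fun A => S ∩ A, fun A hA => ⟨Set.inter_subset_right, inter_infinite hSinf (hS A hA)⟩,
    ?_, ?_⟩
  · rintro X ⟨A, hA, rfl⟩
    exact inter_infinite hSinf (hS A hA)
  · rintro X ⟨A, hA, rfl⟩ Y ⟨B, hB, rfl⟩
    left
    have hsub : (S ∩ A) \ (S ∩ B) ⊆ S \ B := by
      intro x hx
      exact ⟨hx.1.1, fun hxB => hx.2 ⟨hx.1.1, hxB⟩⟩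
    exact Set.Finite.subset (hS B hB) hsub

/-! ### Existence of a tower (maximal chain without pseudo-intersection) -/

lemma exists_tower : ∃ M : Set (Set ℕ), LinQuasiOrdered M ∧ ¬ HasPseudoIntersection M := by
  have hub : ∀ c ⊆ {F : Set (Set ℕ) | LinQuasiOrdered F}, IsChain (· ⊆ ·) c →
      ∃ ub ∈ {F : Set (Set ℕ) | LinQuasiOrdered F}, ∀ s ∈ c, s ⊆ ub := by
    intro c hc hchain
    refine ⟨⋃₀ c, ⟨?_, ?_⟩, fun s hs => Set.subset_sUnion_of_mem hs⟩
    · rintro A ⟨F, hF, hA⟩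
      exact (hc hF).1 A hA
    · rintro A ⟨F1, hF1, hA⟩ B ⟨F2, hF2, hB⟩
      rcases hchain.total hF1 hF2 with h | h
      · exact (hc hF2).2 A (h hA) B hB
      · exact (hc hF1).2 A hA B (h hB)
  obtain ⟨M, hM⟩ := zorn_subset {F : Set (Set ℕ) | LinQuasiOrdered F} hub
  refine ⟨M, hM.prop, ?_⟩
  rintro ⟨A, hAinf, hA⟩
  let e : ℕ ↪ A := Set.Infinite.natEmbedding A hAinf
  have heinj : ∀ a b : ℕ, (e a : ℕ) = (e b : ℕ) → a = b := by
    intro a b hab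
    exact e.injective (Subtype.coe_injective hab)
  let A1 : Set ℕ := Set.range (fun n => (e (2 * n) : ℕ))
  have hA1A : A1 ⊆ A := by
    rintro x ⟨n, rfl⟩
    exact (e (2 * n)).2
  have hA1inf : A1.Infinite := by
    apply Set.infinite_range_of_injective
    intro a b hab
    have := heinj _ _ hab
    omega
  have hoddmem : ∀ n : ℕ, (e (2 * n + 1) : ℕ) ∈ A \ A1 := by
    intro n
    refine ⟨(e (2 * n + 1)).2, ?_⟩
    rintro ⟨m, hm⟩
    have := heinj _ _ hm
    omega
  have hdiffinf : (A \ A1).Infinite := by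
    have hinj : Function.Injective (fun n : ℕ => (e (2 * n + 1) : ℕ)) := by
      intro a b hab
      have := heinj _ _ hab
      omega
    exact Set.infinite_of_injective_forall_mem hinj hoddmem
  have hM' : (insert A1 M) ∈ {F : Set (Set ℕ) | LinQuasiOrdered F} := by
    constructor
    · rintro B (rfl | hB)
      · exact hA1inf
      · exact hM.prop.1 B hB
    · rintro B (rfl | hB) C (rfl | hC)
      · left; exact star_refl _
      · left
        exact Set.Finite.subset (hA C hC) (fun x hx => ⟨hA1A hx.1, hx.2⟩)
      · right
        exact Set.Finite.subset (hA B hB) (fun x hx => ⟨hA1A hx.1, hx.2⟩)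
      · exact hM.prop.2 B hB C hC
  have hA1M : A1 ∈ M := by
    have hsub : insert A1 M ⊆ M := hM.2 hM' (Set.subset_insert _ _)
    exact hsub (Set.mem_insert _ _)
  have hfin : (A \ A1).Finite := hA A1 hA1M
  exact hdiffinf hfin

/-! ### The witness family for 𝔭* -/

def pr : ℕ ≃ ℕ × ℕ := Nat.pairEquiv.symm

def Af (f : ℕ → ℕ) : Set ℕ := {x | f (pr x).1 ≤ (pr x).2}

def Vv (k : ℕ) : Set ℕ := {x | k ≤ (pr x).1}

def WFam : Set (Set ℕ) := Set.range Af ∪ Set.range Vv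

lemma SgK_infinite (g : ℕ → ℕ) (K : ℕ) :
    {x : ℕ | K ≤ (pr x).1 ∧ g (pr x).1 ≤ (pr x).2}.Infinite := by
  have hinj : Function.Injective (fun n : ℕ => pr.symm (K + n, g (K + n))) := by
    intro a b hab
    have h2 := pr.symm.injective hab
    have := congrArg Prod.fst h2
    simpa using this
  apply Set.infinite_of_injective_forall_mem hinj
  intro n
  simp only [Set.mem_setOf_eq, Equiv.apply_symm_apply]
  exact ⟨Nat.le_add_right _ _, le_refl _⟩

open Classical in
noncomputable def foF (A : Set ℕ) : ℕ → ℕ :=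
  if h : ∃ f, A = Af f then h.choose else fun _ => 0

open Classical in
noncomputable def koF (A : Set ℕ) : ℕ :=
  if h : ∃ k, A = Vv k then h.choose else 0

lemma foF_spec {A : Set ℕ} (h : ∃ f, A = Af f) : A = Af (foF A) := by
  unfold foF
  rw [dif_pos h]
  exact h.choose_spec

lemma koF_spec {A : Set ℕ} (h : ∃ k, A = Vv k) : A = Vv (koF A) := by
  unfold koF
  rw [dif_pos h]
  exact h.choose_spec

lemma WFam_centered : Centered WFam := by
  classical
  intro G hG _
  apply Set.Infinite.mono ?sub
    (SgK_infinite (fun n => G.sup (fun A => foF A n)) (G.sup koF))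
  case sub =>
    intro x hx
    simp only [Set.mem_setOf_eq] at hx
    simp only [Set.mem_iInter]
    intro A hA
    rcases hG (Finset.mem_coe.mpr hA) with ⟨f, hf⟩ | ⟨k, hk⟩
    · have hspec : A = Af (foF A) := foF_spec ⟨f, hf.symm⟩
      rw [hspec]
      show foF A (pr x).1 ≤ (pr x).2
      calc foF A (pr x).1 ≤ G.sup (fun A => foF A (pr x).1) :=
            Finset.le_sup (f := fun A => foF A (pr x).1) hA
        _ ≤ (pr x).2 := hx.2
    · have hspec : A = Vv (koF A) := koF_spec ⟨k, hk.symm⟩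
      rw [hspec]
      show koF A ≤ (pr x).1
      calc koF A ≤ G.sup koF := Finset.le_sup hA
        _ ≤ (pr x).1 := hx.1

lemma col_finite {X : Set ℕ} (h : ∀ k, (X \ Vv k).Finite) (n : ℕ) :
    (X ∩ {x | (pr x).1 = n}).Finite := by
  apply Set.Finite.subset (h (n + 1))
  rintro x ⟨hx, hxn⟩
  refine ⟨hx, ?_⟩
  simp only [Vv, Set.mem_setOf_eq] at hxn ⊢
  omega

lemma exists_disjoint_Af {X : Set ℕ} (h : ∀ n, (X ∩ {x | (pr x).1 = n}).Finite) :
    ∃ g : ℕ → ℕ, X ∩ Af g = ∅ := by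
  refine ⟨fun n => ((h n).toFinset.sup (fun x => (pr x).2)) + 1, ?_⟩
  ext x
  simp only [Set.mem_inter_iff, Set.mem_empty_iff_false, iff_false, not_and]
  intro hxX hxA
  have hx : x ∈ (h (pr x).1).toFinset := by
    rw [Set.Finite.mem_toFinset]
    exact ⟨hxX, rfl⟩
  have hle : (pr x).2 ≤ (h (pr x).1).toFinset.sup (fun x => (pr x).2) :=
    Finset.le_sup (f := fun x => (pr x).2) hx
  have hge : ((h (pr x).1).toFinset.sup (fun x => (pr x).2)) + 1 ≤ (pr x).2 := hxA
  omega

lemma WFam_noPI : ¬ HasPseudoIntersection WFam := by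
  rintro ⟨S, hSinf, hS⟩
  have hV : ∀ k, (S \ Vv k).Finite := fun k => hS (Vv k) (Or.inr ⟨k, rfl⟩)
  obtain ⟨g, hg⟩ := exists_disjoint_Af (col_finite hV)
  have hfin : (S \ Af g).Finite := hS (Af g) (Or.inl ⟨g, rfl⟩)
  have hSdiff : S \ Af g = S := by
    ext x
    constructor
    · exact fun hx => hx.1
    · intro hx
      refine ⟨hx, fun hxA => ?_⟩
      have : x ∈ S ∩ Af g := ⟨hx, hxA⟩
      rw [hg] at this
      exact this
  rw [hSdiff] at hfin
  exact hSinf hfin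

lemma countable_pi (E : ℕ → Set ℕ) (hinf : ∀ k, (E k).Infinite)
    (hmono : ∀ j k, j ≤ k → E k ⊆ E j) :
    ∃ S : Set ℕ, S.Infinite ∧ ∀ k, (S \ E k).Finite := by
  classical
  let f : ℕ → ℕ := fun k => Nat.rec ((hinf 0).nonempty.choose)
      (fun k ih => ((hinf (k + 1)).exists_gt ih).choose) k
  have hf0 : f 0 ∈ E 0 := (hinf 0).nonempty.choose_spec
  have hfs : ∀ k, f (k + 1) ∈ E (k + 1) ∧ f k < f (k + 1) := by
    intro k
    obtain ⟨h1, h2⟩ := ((hinf (k + 1)).exists_gt (f k)).choose_spec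
    exact ⟨h1, h2⟩
  have hmem : ∀ k, f k ∈ E k := by
    intro k
    induction k with
    | zero => exact hf0
    | succ k _ => exact (hfs k).1
  have hsm : StrictMono f := strictMono_nat_of_lt_succ (fun k => (hfs k).2)
  refine ⟨Set.range f, Set.infinite_range_of_injective hsm.injective, fun k => ?_⟩
  apply Set.Finite.subset ((Set.finite_Iio k).image f)
  rintro x ⟨⟨j, rfl⟩, hx⟩
  by_cases hj : j < k
  · exact ⟨j, hj, rfl⟩
  · exact absurd (hmono k j (le_of_not_gt hj) (hmem j)) hx

lemma WFam_not_refinable : ¬ LinearlyRefinable WFam := by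
  classical
  rintro ⟨r, hr, hL⟩
  have hmemA : ∀ f : ℕ → ℕ, r (Af f) ∈ r '' WFam :=
    fun f => ⟨Af f, Or.inl ⟨f, rfl⟩, rfl⟩
  have hmemV : ∀ k, r (Vv k) ∈ r '' WFam :=
    fun k => ⟨Vv k, Or.inr ⟨k, rfl⟩, rfl⟩
  have hrA : ∀ f, r (Af f) ⊆ Af f ∧ (r (Af f)).Infinite :=
    fun f => hr _ (Or.inl ⟨f, rfl⟩)
  have hrV : ∀ k, r (Vv k) ⊆ Vv k ∧ (r (Vv k)).Infinite :=
    fun k => hr _ (Or.inr ⟨k, rfl⟩)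
  by_cases hcase : ∀ f : ℕ → ℕ, ∃ k, StarSubset (r (Vv k)) (r (Af f))
  · -- the refined co-columns are coinitial: diagonalize to get a pseudo-intersection
    have hcent := chain_centered hL
    set E : ℕ → Set ℕ := fun k => ⋂ j ∈ Finset.range (k + 1), r (Vv j) with hE
    have hEinf : ∀ k, (E k).Infinite := by
      intro k
      have hsub : ↑((Finset.range (k + 1)).image (fun j => r (Vv j))) ⊆ r '' WFam := by
        intro X hX
        simp only [Finset.coe_image, Set.mem_image, Finset.mem_coe] at hX
        obtain ⟨j, _, rfl⟩ := hX
        exact hmemV j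
      have hne : ((Finset.range (k + 1)).image (fun j => r (Vv j))).Nonempty :=
        Finset.Nonempty.image (Finset.nonempty_range_add_one) _
      have h1 := hcent _ hsub hne
      apply Set.Infinite.mono ?s h1
      case s =>
        intro x hx
        simp only [hE, Set.mem_iInter]
        intro j hj
        simp only [Set.mem_iInter] at hx
        exact hx (r (Vv j)) (Finset.mem_image_of_mem _ hj)
    have hEmono : ∀ j k, j ≤ k → E k ⊆ E j := by
      intro j k hjk x hx
      simp only [hE, Set.mem_iInter] at hx ⊢
      intro i hi
      refine hx i ?_
      simp only [Finset.mem_range] at hi ⊢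
      omega
    obtain ⟨S, hSinf, hSE⟩ := countable_pi E hEinf hEmono
    apply WFam_noPI
    refine ⟨S, hSinf, ?_⟩
    have hSV : ∀ k, StarSubset S (r (Vv k)) := by
      intro k
      have hk : E k ⊆ r (Vv k) := by
        intro x hx
        simp only [hE, Set.mem_iInter] at hx
        exact hx k (by simp)
      apply Set.Finite.subset (hSE k)
      intro x hx
      exact ⟨hx.1, fun hxE => hx.2 (hk hxE)⟩
    rintro B (⟨f, rfl⟩ | ⟨k, rfl⟩)
    · obtain ⟨k, hk⟩ := hcase f
      exact star_trans (star_trans (hSV k) hk) (star_of_subset (hrA f).1)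
    · exact star_trans (hSV k) (star_of_subset (hrV k).1)
  · -- some refined set lies below all refined co-columns: diagonalize against it
    push_neg at hcase
    obtain ⟨f0, hf0⟩ := hcase
    have hBC : ∀ k, StarSubset (r (Af f0)) (r (Vv k)) := by
      intro k
      rcases hL.2 _ (hmemV k) _ (hmemA f0) with h | h
      · exact absurd h (hf0 k)
      · exact h
    have hXV : ∀ k, ((r (Af f0)) \ Vv k).Finite :=
      fun k => star_trans (hBC k) (star_of_subset (hrV k).1)
    obtain ⟨g, hg⟩ := exists_disjoint_Af (col_finite hXV)
    have hXinf : (r (Af f0)).Infinite := (hrA f0).2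
    rcases hL.2 _ (hmemA f0) _ (hmemA g) with h | h
    · have hsub : r (Af f0) ⊆ r (Af f0) \ r (Af g) := by
        intro x hx
        refine ⟨hx, fun hxr => ?_⟩
        have hmem : x ∈ r (Af f0) ∩ Af g := ⟨hx, (hrA g).1 hxr⟩
        rw [hg] at hmem
        exact hmem
      exact hXinf (Set.Finite.subset h hsub)
    · have hint := inter_infinite (hrA g).2 h
      apply hint
      apply Set.Finite.subset (Set.finite_empty)
      intro x hx
      rw [← hg]
      exact ⟨hx.2, (hrA g).1 hx.1⟩

/-- 𝔭 = min {𝔭*, 𝔱}. -/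
theorem stmt7 : pNum = min pStar tNum := by
  classical
  have hsub_t : { c | ∃ F : Set (Set ℕ), LinQuasiOrdered F ∧ ¬ HasPseudoIntersection F ∧ c = #F }
      ⊆ { c | ∃ F : Set (Set ℕ), Centered F ∧ ¬ HasPseudoIntersection F ∧ c = #F } := by
    rintro c ⟨F, hF, hPI, rfl⟩
    exact ⟨F, chain_centered hF, hPI, rfl⟩
  have hsub_s : { c | ∃ F : Set (Set ℕ), Centered F ∧ ¬ LinearlyRefinable F ∧ c = #F }
      ⊆ { c | ∃ F : Set (Set ℕ), Centered F ∧ ¬ HasPseudoIntersection F ∧ c = #F } := by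
    rintro c ⟨F, hF, href, rfl⟩
    exact ⟨F, hF, fun h => href (refinable_of_hasPI h), rfl⟩
  have hTne : { c | ∃ F : Set (Set ℕ), LinQuasiOrdered F ∧ ¬ HasPseudoIntersection F ∧
      c = #F }.Nonempty := by
    obtain ⟨M, h1, h2⟩ := exists_tower
    exact ⟨#M, M, h1, h2, rfl⟩
  have hSne : { c | ∃ F : Set (Set ℕ), Centered F ∧ ¬ LinearlyRefinable F ∧ c = #F }.Nonempty :=
    ⟨#WFam, WFam, WFam_centered, WFam_not_refinable, rfl⟩
  have hPne : { c | ∃ F : Set (Set ℕ), Centered F ∧ ¬ HasPseudoIntersection F ∧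
      c = #F }.Nonempty := ⟨_, hsub_t (csInf_mem hTne)⟩
  have h1 : pNum ≤ tNum := csInf_le' (hsub_t (csInf_mem hTne))
  have h2 : pNum ≤ pStar := csInf_le' (hsub_s (csInf_mem hSne))
  have h3 : min pStar tNum ≤ pNum := by
    obtain ⟨F, hcent, hPI, hcard⟩ :
        ∃ F : Set (Set ℕ), Centered F ∧ ¬ HasPseudoIntersection F ∧ pNum = #F :=
      csInf_mem hPne
    by_cases href : LinearlyRefinable F
    · obtain ⟨r, hr, hL⟩ := href
      have hnoPI : ¬ HasPseudoIntersection (r '' F) := by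
        rintro ⟨S, hSinf, hS⟩
        apply hPI
        refine ⟨S, hSinf, fun B hB => ?_⟩
        exact star_trans (hS (r B) (Set.mem_image_of_mem r hB)) (star_of_subset (hr B hB).1)
      have ht : tNum ≤ #(r '' F) := csInf_le' ⟨r '' F, hL, hnoPI, rfl⟩
      calc min pStar tNum ≤ tNum := min_le_right _ _
        _ ≤ #(r '' F) := ht
        _ ≤ #F := Cardinal.mk_image_le
        _ = pNum := hcard.symm
    · have hp : pStar ≤ #F := csInf_le' ⟨F, hcent, href, rfl⟩
      calc min pStar tNum ≤ pStar := min_le_left _ _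
        _ ≤ #F := hp
        _ = pNum := hcard.symm
  exact le_antisymm (le_min h2 h1) h3
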